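/- Let ω⁺(x) = c_S |x|⁻⁴ (1 + A (r/|x|)^ξ) for |x| ≥ r, with c_S = 3⁴ 2⁻³ π², ξ = (−7 + √73)/2, r > 0, and A ≥ 0. Then Δω⁺(x) ≤ 4π c_TF^{−3/2} ω⁺(x)^{3/2} for all |x| > r, where c_TF = 2⁻¹ (3π²)^{2/3}. -/

import Mathlib

open Real Finset

noncomputable abbrev E3 := EuclideanSpace ℝ (Fin 3)

noncomputable def e3 (i : Fin 3) : E3 := EuclideanSpace.basisFun (Fin 3) ℝ i

/-- The Laplacian of `f : ℝ³ → ℝ`. -/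
noncomputable def laplacianE3 (f : E3 → ℝ) (x : E3) : ℝ :=
  ∑ i, iteratedFDeriv ℝ 2 f x ![e3 i, e3 i]

/-- The Sommerfeld constant `c_S = 3⁴ 2⁻³ π²`. -/
noncomputable def cS : ℝ := 3 ^ 4 * 2⁻¹ ^ 3 * π ^ 2

/-- The Thomas–Fermi constant `c_TF = 2⁻¹ (3π²)^{2/3}`. -/
noncomputable def cTF : ℝ := 2⁻¹ * (3 * π ^ 2) ^ ((2 : ℝ) / 3)

/-- The exponent `ξ = (−7 + √73)/2`. -/
noncomputable def ξ : ℝ := (-7 + Real.sqrt 73) / 2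

/-!
Away from `r`, `ω⁺ = c_S |x|⁻⁴ + c_S A r^ξ |x|^(-4-ξ)` is a combination of two powers of `|x|`,
and in `ℝ³` one has `Δ |x|^m = m (m + 1) |x|^(m-2)`. With `t = A (r/|x|)^ξ` this gives
`Δω⁺ = c_S |x|⁻⁶ (12 + (4+ξ)(3+ξ) t) = 12 c_S |x|⁻⁶ (1 + 3t/2)`, since `ξ` is the positive root
of `(4+ξ)(3+ξ) = 18`. On the other side `4π c_TF^(-3/2) c_S^(1/2) = 12`, so
`4π c_TF^(-3/2) (ω⁺)^(3/2) = 12 c_S |x|⁻⁶ (1 + t)^(3/2)`, and Bernoulli's inequality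
`(1 + t)^(3/2) ≥ 1 + 3t/2` concludes.
-/

open InnerProductSpace Filter Topology Module Laplacian

section Radial

variable {E : Type*} [NormedAddCommGroup E] [InnerProductSpace ℝ E] [FiniteDimensional ℝ E]

theorem laplacian_comp_norm_sq {g g' : ℝ → ℝ} {g'' : ℝ} {x : E}
    (hg : ∀ᶠ s in 𝓝 (‖x‖ ^ 2), HasDerivAt g (g' s) s) (hg' : HasDerivAt g' g'' (‖x‖ ^ 2)) :
    Δ (fun y : E => g (‖y‖ ^ 2)) x = 2 * finrank ℝ E * g' (‖x‖ ^ 2) + 4 * ‖x‖ ^ 2 * g'' := by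
  have hN : ∀ y : E, HasFDerivAt (fun y : E => ‖y‖ ^ 2) (2 • innerSL ℝ y) y := fun y =>
    (hasStrictFDerivAt_norm_sq y).hasFDerivAt
  have hcont : Continuous fun y : E => ‖y‖ ^ 2 := by fun_prop
  have hDf : fderiv ℝ (fun y : E => g (‖y‖ ^ 2)) =ᶠ[𝓝 x]
      fun y => (2 * g' (‖y‖ ^ 2)) • innerSL ℝ y := by
    filter_upwards [hcont.continuousAt.eventually hg] with y hy
    refine (hy.comp_hasFDerivAt y (hN y)).fderiv.trans ?_
    ext v
    simp only [smul_apply, coe_innerSL_apply, nsmul_eq_mul, Nat.cast_ofNat,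
      smul_eq_mul]
    ring
  have hD2f : HasFDerivAt (fun y : E => (2 * g' (‖y‖ ^ 2)) • innerSL ℝ y) _ x :=
    ((hg'.comp_hasFDerivAt x (hN x)).const_mul 2).smul (innerSL ℝ).hasFDerivAt
  set b := stdOrthonormalBasis ℝ E
  have hterm : ∀ i, iteratedFDeriv ℝ 2 (fun y : E => g (‖y‖ ^ 2)) x ![b i, b i] =
      2 * g' (‖x‖ ^ 2) + 4 * g'' * ⟪b i, x⟫_ℝ ^ 2 := by
    intro i
    simp only [iteratedFDeriv_two_apply, Matrix.cons_val_zero, Matrix.cons_val_one,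
      hDf.fderiv_eq, hD2f.fderiv]
    have hbi : innerSL ℝ (b i) (b i) = 1 := by
      rw [innerSL_apply_apply, real_inner_self_eq_norm_sq, b.norm_eq_one, one_pow]
    simp only [Function.comp_apply, add_apply, smul_apply,
      ContinuousLinearMap.smulRight_apply, coe_innerSL_apply, nsmul_eq_mul, Nat.cast_ofNat,
      smul_eq_mul, hbi, real_inner_comm x]
    ring
  rw [laplacian_eq_iteratedFDeriv_orthonormalBasis _ b]
  simp only [hterm, sum_add_distrib, ← mul_sum, b.sum_sq_inner_right, sum_const, card_univ,
    Fintype.card_fin, nsmul_eq_mul]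
  ring

theorem laplacian_norm_rpow {x : E} (hx : x ≠ 0) (m : ℝ) :
    Δ (fun y : E => ‖y‖ ^ m) x = m * (m + finrank ℝ E - 2) * ‖x‖ ^ (m - 2) := by
  have hs : ‖x‖ ^ 2 ≠ 0 := by positivity
  have hsq : ∀ (y : E) (p : ℝ), ‖y‖ ^ (2 * p) = (‖y‖ ^ 2) ^ p := fun y p => by
    rw [Real.rpow_mul (norm_nonneg y), Real.rpow_two]
  have hg' : HasDerivAt (fun s : ℝ => m / 2 * s ^ (m / 2 - 1))
      (m / 2 * ((m / 2 - 1) * (‖x‖ ^ 2) ^ (m / 2 - 1 - 1))) (‖x‖ ^ 2) :=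
    (Real.hasDerivAt_rpow_const (Or.inl hs)).const_mul _
  have hg : ∀ᶠ s in 𝓝 (‖x‖ ^ 2),
      HasDerivAt (fun s : ℝ => s ^ (m / 2)) (m / 2 * s ^ (m / 2 - 1)) s := by
    filter_upwards [eventually_ne_nhds hs] with s hs
    exact Real.hasDerivAt_rpow_const (Or.inl hs)
  have hm : (fun y : E => ‖y‖ ^ m) = fun y => (‖y‖ ^ 2) ^ (m / 2) := by
    simp_rw [← hsq, mul_div_cancel₀ m two_ne_zero]
  rw [hm, laplacian_comp_norm_sq hg hg', Real.rpow_sub_one hs (m / 2 - 1), Real.rpow_sub_one hs,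
    ← hsq, mul_div_cancel₀ m two_ne_zero, Real.rpow_sub (norm_pos_iff.2 hx), Real.rpow_two]
  field_simp
  ring

theorem laplacian_mul_norm_rpow_add_mul_norm_rpow {x : E} (hx : x ≠ 0) (a b m k : ℝ) :
    Δ (fun y : E => a * ‖y‖ ^ m + b * ‖y‖ ^ k) x =
      a * (m * (m + finrank ℝ E - 2)) * ‖x‖ ^ (m - 2)
        + b * (k * (k + finrank ℝ E - 2)) * ‖x‖ ^ (k - 2) := by
  have hreg : ∀ p : ℝ, ContDiffAt ℝ 2 (fun y : E => ‖y‖ ^ p) x := fun p =>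
    (contDiffAt_norm ℝ hx).rpow_const_of_ne (norm_ne_zero_iff.2 hx)
  have hsmul : ∀ c p : ℝ, ContDiffAt ℝ 2 (c • fun y : E => ‖y‖ ^ p) x := fun c p =>
    (hreg p).const_smul c
  change Δ ((a • fun y : E => ‖y‖ ^ m) + (b • fun y : E => ‖y‖ ^ k)) x = _
  rw [(hsmul a m).laplacian_add (hsmul b k), laplacian_smul _ (hreg m),
    laplacian_smul _ (hreg k), smul_eq_mul, smul_eq_mul, laplacian_norm_rpow hx,
    laplacian_norm_rpow hx]
  ring

end Radial

theorem laplacianE3_eq_laplacian (f : E3 → ℝ) : laplacianE3 f = Δ f :=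
  (laplacian_eq_iteratedFDeriv_orthonormalBasis f (EuclideanSpace.basisFun (Fin 3) ℝ)).symm

theorem four_add_ξ_mul_three_add_ξ : (4 + ξ) * (3 + ξ) = 18 := by
  have h73 : √73 ^ 2 = 73 := Real.sq_sqrt (by norm_num)
  unfold ξ
  linear_combination h73 / 4

theorem cS_pos : 0 < cS := by unfold cS; positivity

theorem cTF_pos : 0 < cTF := by unfold cTF; positivity

theorem cTF_pow_three : cTF ^ 3 = 2⁻¹ ^ 3 * (3 * π ^ 2) ^ 2 := by
  rw [cTF, mul_pow, ← Real.rpow_mul_natCast (by positivity)]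
  norm_num

theorem four_mul_pi_mul_cTF_rpow_mul_cS_rpow :
    4 * π * cTF ^ (-(3 : ℝ) / 2) * cS ^ ((3 : ℝ) / 2) = 12 * cS := by
  have hsq : ∀ {a : ℝ} (p : ℝ), 0 ≤ a → (a ^ (p / 2)) ^ 2 = a ^ p := fun p ha => by
    rw [← Real.rpow_mul_natCast ha]; norm_num
  have hS := cS_pos
  have hTF := cTF_pos
  refine (pow_left_inj₀ (by positivity) (by positivity) two_ne_zero).1 ?_
  rw [mul_pow, mul_pow, hsq _ hTF.le, hsq _ hS.le, Real.rpow_neg hTF.le,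
    Real.rpow_ofNat, Real.rpow_ofNat, cTF_pow_three, cS]
  field_simp
  ring

theorem mul_inv_pow_four_mul_one_add_eq {ρ r : ℝ} (hρ : 0 < ρ) (hr : 0 ≤ r) (c A p : ℝ) :
    c * (ρ ^ 4)⁻¹ * (1 + A * (r / ρ) ^ p) = c * ρ ^ (-4 : ℝ) + c * A * r ^ p * ρ ^ (-4 - p) := by
  rw [Real.rpow_sub hρ, Real.rpow_neg hρ.le, Real.div_rpow hr hρ.le, Real.rpow_ofNat]
  ring

theorem four_mul_pi_mul_cTF_rpow_mul_rpow_eq {ρ s : ℝ} (hρ : 0 < ρ) (hs : 0 ≤ s) :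
    4 * π * cTF ^ (-(3 : ℝ) / 2) * (cS * (ρ ^ 4)⁻¹ * s) ^ ((3 : ℝ) / 2)
      = 12 * cS * ρ ^ (-6 : ℝ) * s ^ ((3 : ℝ) / 2) := by
  have hρ4 : ((ρ ^ 4)⁻¹) ^ ((3 : ℝ) / 2) = ρ ^ (-6 : ℝ) := by
    rw [← Real.rpow_natCast, ← Real.rpow_neg hρ.le, ← Real.rpow_mul hρ.le]
    norm_num
  rw [Real.mul_rpow (by have := cS_pos; positivity) hs, Real.mul_rpow cS_pos.le (by positivity),
    hρ4, ← four_mul_pi_mul_cTF_rpow_mul_cS_rpow]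
  ring

theorem laplacianE3_inv_pow_four_mul_one_add {ω : E3 → ℝ} {r : ℝ} (hr : 0 < r) (c A p : ℝ)
    (hω : ∀ y : E3, r < ‖y‖ → ω y = c * (‖y‖ ^ 4)⁻¹ * (1 + A * (r / ‖y‖) ^ p))
    {x : E3} (hx : r < ‖x‖) :
    laplacianE3 ω x = c * ‖x‖ ^ (-6 : ℝ) * (12 + (4 + p) * (3 + p) * (A * (r / ‖x‖) ^ p)) := by
  have hρ : 0 < ‖x‖ := hr.trans hx
  have hω_near : ω =ᶠ[𝓝 x] fun y => c * ‖y‖ ^ (-4 : ℝ) + c * A * r ^ p * ‖y‖ ^ (-4 - p) := by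
    filter_upwards [(isOpen_lt continuous_const continuous_norm).mem_nhds hx] with y hy
    rw [hω y hy, mul_inv_pow_four_mul_one_add_eq (hr.trans hy) hr.le]
  have h6 : ‖x‖ ^ ((-4 : ℝ) - 2) = ‖x‖ ^ (-6 : ℝ) := by norm_num
  have h6p : r ^ p * ‖x‖ ^ (-4 - p - 2) = ‖x‖ ^ (-6 : ℝ) * (r / ‖x‖) ^ p := by
    rw [show -4 - p - 2 = -6 - p by ring, Real.rpow_sub hρ, Real.div_rpow hr.le hρ.le]
    ring
  rw [laplacianE3_eq_laplacian, (laplacian_congr_nhds hω_near).eq_of_nhds,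
    laplacian_mul_norm_rpow_add_mul_norm_rpow (norm_pos_iff.1 hρ), finrank_euclideanSpace_fin, h6]
  push_cast
  linear_combination (c * A * (4 + p) * (3 + p)) * h6p

/-- Supersolution property of the perturbed Sommerfeld function:
`Δω⁺ ≤ 4π c_TF^{−3/2} (ω⁺)^{3/2}` for `|x| > r`, where
`ω⁺(x) = c_S |x|⁻⁴ (1 + A (r/|x|)^ξ)`. -/
theorem stmt_16 (r A : ℝ) (hr : 0 < r) (hA : 0 ≤ A)
    (ω : E3 → ℝ)
    (hω : ∀ x : E3, r ≤ ‖x‖ →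
      ω x = cS * (‖x‖ ^ 4)⁻¹ * (1 + A * (r / ‖x‖) ^ ξ)) :
    ∀ x : E3, r < ‖x‖ →
      laplacianE3 ω x ≤ 4 * π * cTF ^ (-(3 : ℝ) / 2) * ω x ^ ((3 : ℝ) / 2) := by
  intro x hx
  have hρ : 0 < ‖x‖ := hr.trans hx
  have ht : 0 ≤ A * (r / ‖x‖) ^ ξ := by positivity
  rw [laplacianE3_inv_pow_four_mul_one_add hr cS A ξ (fun y hy => hω y hy.le) hx, hω x hx.le,
    four_mul_pi_mul_cTF_rpow_mul_rpow_eq hρ (by positivity), four_add_ξ_mul_three_add_ξ]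
  have hbernoulli := one_add_mul_self_le_rpow_one_add (by linarith : -1 ≤ A * (r / ‖x‖) ^ ξ)
    (by norm_num : (1 : ℝ) ≤ 3 / 2)
  have hscale : 0 ≤ cS * ‖x‖ ^ (-6 : ℝ) := by have := cS_pos; positivity
  linarith [mul_le_mul_of_nonneg_left hbernoulli hscale]
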